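/- arXiv:1109.1391 — 7 statements merged into one kernel-verified Lean document; each statement's English description precedes it below -/
import Mathlib

section
/- For any two nonzero integers a and b, there exist a nonnegative integer n and integers c, d such that b^n = c·a + d·b^(n+1). Consequently any two integers are algebraically dependent over ℤ (with respect to the lexicographic ordering with x₁ > x₂). -/
/-- A multivariate polynomial is *submonic with respect to the lexicographic
monomial ordering* (with `x 0 > x 1 > …`) if the least monomial of its support
(for the lexicographic order on exponents) has coefficient `1`. -/
def MvPolynomial.SubmonicLex {n : ℕ} {R : Type*} [CommRing R]
    (f : MvPolynomial (Fin n) R) : Prop :=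
  ∃ m ∈ f.support, MvPolynomial.coeff m f = 1 ∧
    ∀ m' ∈ f.support, toLex m ≤ toLex m'

/-! Modulo `a ≠ 0` the powers of `b` eventually repeat, `b ^ i ≡ b ^ j` with `i < j`, and
`b ^ j = b ^ (j - i - 1) * b ^ (i + 1)` gives `b ^ i = c * a + d * b ^ (i + 1)`. The polynomial
`X 1 ^ i - c X 0 - d X 1 ^ (i + 1)` then vanishes at `(a, b)`, and its lexicographically least
monomial is `X 1 ^ i`, with coefficient `1`. For `a = 0` `X 0` does. -/

open MvPolynomial

theorem exists_pow_eq_pow_mul_pow_succ {M : Type*} [Monoid M] [Finite M] (b : M) :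
    ∃ n k : ℕ, b ^ n = b ^ k * b ^ (n + 1) := by
  obtain ⟨i, j, hne, hij⟩ := Finite.exists_ne_map_eq_of_infinite (b ^ · : ℕ → M)
  wlog hlt : i < j generalizing i j
  · exact this j i hne.symm hij.symm (by omega)
  refine ⟨i, j - (i + 1), ?_⟩
  rw [← pow_add, Nat.sub_add_cancel hlt]
  exact hij

theorem Int.exists_pow_eq_mul_add_mul_pow_succ {a : ℤ} (ha : a ≠ 0) (b : ℤ) :
    ∃ (n : ℕ) (c d : ℤ), b ^ n = c * a + d * b ^ (n + 1) := by
  have : NeZero a.natAbs := ⟨Int.natAbs_ne_zero.mpr ha⟩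
  obtain ⟨n, k, h⟩ := exists_pow_eq_pow_mul_pow_succ (b : ZMod a.natAbs)
  obtain ⟨c, hc⟩ : a ∣ b ^ n - b ^ k * b ^ (n + 1) := by
    rw [← Int.natAbs_dvd, ← ZMod.intCast_zmod_eq_zero_iff_dvd]
    push_cast
    rw [h, sub_self]
  exact ⟨n, c, b ^ k, by linear_combination hc⟩

namespace MvPolynomial

variable {R : Type*} [CommRing R] [Nontrivial R] {n : ℕ}

theorem submonicLex_monomial_one_add (m : Fin n →₀ ℕ) {g : MvPolynomial (Fin n) R}
    (hg : ∀ m' ∈ g.support, toLex m < toLex m') : SubmonicLex (monomial m 1 + g) := by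
  have hm : coeff m g = 0 := notMem_support_iff.mp fun h => lt_irrefl _ (hg m h)
  have hcoeff : coeff m (monomial m 1 + g) = 1 := by simp [hm]
  refine ⟨m, mem_support_iff.mpr (by simp [hcoeff]), hcoeff, fun m' hm' => ?_⟩
  rcases Finset.mem_union.mp (support_add hm') with h | h
  · rw [Finset.mem_singleton.mp (support_monomial_subset h)]
  · exact (hg m' h).le

theorem submonicLex_X (i : Fin n) : SubmonicLex (X i : MvPolynomial (Fin n) R) := by
  rw [X, ← add_zero (monomial _ 1)]
  exact submonicLex_monomial_one_add _ (by simp)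

theorem submonicLex_X_one_pow_add (k : ℕ) (c d : R) :
    SubmonicLex (X 1 ^ k + C c * X 0 + C d * X 1 ^ (k + 1) : MvPolynomial (Fin 2) R) := by
  have hlt : ∀ m ∈ ({Finsupp.single 0 1} ∪ {Finsupp.single 1 (k + 1)} : Finset (Fin 2 →₀ ℕ)),
      toLex (Finsupp.single (1 : Fin 2) k) < toLex m := by
    simp only [Finset.mem_union, Finset.mem_singleton, forall_eq_or_imp, forall_eq]
    constructor
    · exact Finsupp.Lex.lt_iff.mpr ⟨0, fun j hj => absurd hj (Fin.not_lt_zero j), by simp⟩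
    · refine Finsupp.Lex.lt_iff.mpr ⟨1, fun j hj => ?_, by simp⟩
      obtain rfl : j = 0 := by omega
      simp
  rw [add_assoc, X_pow_eq_monomial, C_mul_X_eq_monomial, C_mul_X_pow_eq_monomial]
  exact submonicLex_monomial_one_add _ fun m hm =>
    hlt m (Finset.union_subset_union support_monomial_subset support_monomial_subset
      (support_add hm))

end MvPolynomial

/-- For any two nonzero integers `a`, `b` there are `n`, `c`, `d` with
`b ^ n = c * a + d * b ^ (n + 1)`; consequently any two integers are
algebraically dependent over `ℤ` with respect to the lexicographic ordering. -/
theorem int_pairs_algebraically_dependent :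
    (∀ a b : ℤ, a ≠ 0 → b ≠ 0 → ∃ (n : ℕ) (c d : ℤ),
      b ^ n = c * a + d * b ^ (n + 1)) ∧
    ∀ a b : ℤ, ∃ f : MvPolynomial (Fin 2) ℤ,
      f.SubmonicLex ∧ MvPolynomial.eval ![a, b] f = 0 := by
  refine ⟨fun a b ha _ => Int.exists_pow_eq_mul_add_mul_pow_succ ha b, fun a b => ?_⟩
  rcases eq_or_ne a 0 with rfl | ha
  · exact ⟨X 0, submonicLex_X 0, by simp⟩
  obtain ⟨n, c, d, h⟩ := Int.exists_pow_eq_mul_add_mul_pow_succ ha b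
  refine ⟨_, submonicLex_X_one_pow_add n (-c) (-d), ?_⟩
  simp only [map_add, map_mul, map_pow, eval_C, eval_X, Matrix.cons_val_zero, Matrix.cons_val_one]
  linear_combination h
end

section
/- In the polynomial ring R = K[t₁,t₂] over a field K, the elements a = t₁ and b = t₁t₂ are algebraically dependent over R with respect to the lexicographic monomial ordering with x₁ > x₂ (via the relation b − t₂a = 0), but algebraically independent over R with respect to the lexicographic ordering with x₂ > x₁; concretely, for all i,j ∈ ℕ, the element t₁^{i+j} t₂^j does not lie in the ideal of R generated by (t₁t₂)^{j+1} and t₁^{i+j+1} t₂^j. -/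
/-!
Under lex with `x₁ > x₂` the relation `x₂ - t₂ x₁` has trailing monomial `x₂`, with coefficient
`1`. The ideal `((t₁t₂)^(j+1), t₁^(i+j+1) t₂^j)` is spanned by monomials, so a monomial lies in it
iff one of the generators divides it; `t₁^(i+j) t₂^j` has too small a `t₂`-exponent for the
first generator and too small a `t₁`-exponent for the second.
-/

namespace MvPolynomial

theorem submonicLex_X_sub_C_mul_X {n : ℕ} {R : Type*} [CommRing R] [Nontrivial R]
    {i j : Fin n} (hji : j < i) (c : R) :
    (X i - C c * X j : MvPolynomial (Fin n) R).SubmonicLex := by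
  classical
  have hne : Finsupp.single j 1 ≠ Finsupp.single i 1 := by
    simpa [Finsupp.single_eq_single_iff] using hji.ne
  have hcoeff : coeff (Finsupp.single i 1) (X i - C c * X j : MvPolynomial (Fin n) R) = 1 := by
    simp [coeff_X, coeff_C_mul, hne]
  refine ⟨Finsupp.single i 1, by simp [mem_support_iff, hcoeff], hcoeff, fun m hm => ?_⟩
  have hsupp : m = Finsupp.single i 1 ∨ m = Finsupp.single j 1 := by
    contrapose! hm
    simp [mem_support_iff, coeff_X, coeff_C_mul, Ne.symm hm.1, Ne.symm hm.2]
  rcases hsupp with rfl | rfl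
  · exact le_rfl
  · exact Finsupp.Lex.single_le_iff.mpr hji.le

variable {σ R : Type*} [CommSemiring R]

theorem X_pow_mul_X_pow_eq_monomial (i j : σ) (p q : ℕ) :
    (X i ^ p * X j ^ q : MvPolynomial σ R) =
      monomial (Finsupp.single i p + Finsupp.single j q) 1 := by
  rw [X_pow_eq_monomial, X_pow_eq_monomial, monomial_mul, one_mul]

theorem monomial_one_mem_span_pair_iff [Nontrivial R] {m a b : σ →₀ ℕ} :
    monomial m (1 : R) ∈ Ideal.span {monomial a 1, monomial b 1} ↔ a ≤ m ∨ b ≤ m := by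
  classical
  rw [← Set.image_pair (fun s => monomial s (1 : R)), mem_ideal_span_monomial_image,
    support_monomial, if_neg one_ne_zero]
  simp

end MvPolynomial

open MvPolynomial in
/-- In `R = K[t₁,t₂]`, the elements `a = t₁`, `b = t₁t₂` are algebraically
dependent over `R` w.r.t. the lexicographic ordering with `x₁ > x₂`, but for the
lexicographic ordering with `x₂ > x₁` they are independent: concretely,
`t₁^(i+j) t₂^j ∉ ((t₁t₂)^(j+1), t₁^(i+j+1) t₂^j)` for all `i, j`. -/
theorem lex_dependence_depends_on_ordering {K : Type*} [Field K] :
    (∃ f : MvPolynomial (Fin 2) (MvPolynomial (Fin 2) K), f.SubmonicLex ∧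
      MvPolynomial.eval ![(X 0 : MvPolynomial (Fin 2) K), X 0 * X 1] f = 0) ∧
    ∀ i j : ℕ, (X 0 : MvPolynomial (Fin 2) K) ^ (i + j) * X 1 ^ j ∉
      Ideal.span {((X 0 : MvPolynomial (Fin 2) K) * X 1) ^ (j + 1),
        X 0 ^ (i + j + 1) * X 1 ^ j} := by
  refine ⟨⟨X 1 - C (X 1) * X 0, submonicLex_X_sub_C_mul_X Fin.zero_lt_one _, ?_⟩,
    fun i j => ?_⟩
  · simp only [map_sub, eval_mul, eval_C, eval_X, Matrix.cons_val_one, Matrix.cons_val_zero]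
    ring
  · rw [mul_pow, X_pow_mul_X_pow_eq_monomial, X_pow_mul_X_pow_eq_monomial,
      X_pow_mul_X_pow_eq_monomial, monomial_one_mem_span_pair_iff]
    rintro (h | h)
    · simpa using h 1
    · simpa using h 0
end

section
/- Let R be a commutative ring and n ∈ ℕ. Then the Krull dimension of R is less than n if and only if for all a₁,...,aₙ ∈ R there exist natural numbers m₁,...,mₙ such that the product a₁^{m₁}···aₙ^{mₙ} lies in the ideal of R generated by the elements a_j · a₁^{m₁}···a_j^{m_j} for j = 1,...,n. -/
/-!
Induction on `n` through the boundary monoids `Sᵇ = b^ℕ (1 + bR)`. Geometrically,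
`dim R < n + 1` iff `dim (Sᵇ)⁻¹R < n` for every `b`: in a chain `p₀ < ⋯ < p_{n+1}` any
`b ∈ p_{n+1} \ p_n` makes `Sᵇ` disjoint from `p₀, …, p_n`, while a prime disjoint from `Sᵇ`
stays proper after adding `b`, so it lies strictly below a maximal ideal. Algebraically,
`(a₁, …, aₙ, b)` satisfies the identity in `R` iff `(a₁, …, aₙ)` satisfies it in `(Sᵇ)⁻¹R`:
the generator contributed by `b` is `b · ∏ aᵢ^{mᵢ} · b^k`, and absorbing it is the same as
multiplying `∏ aᵢ^{mᵢ}` by the denominator `b^k (1 + b y)`. Every tuple over `(Sᵇ)⁻¹R` is a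
unit multiple of one coming from `R`, and units do not affect the identity.
-/

open Order Finset

theorem Order.krullDim_lt_succ_iff_of_forall_Iic_subset {α ι : Type*} [Preorder α]
    (U : ι → Set α) (hcover : ∀ p : α, ¬IsMax p → ∃ i, Set.Iic p ⊆ U i)
    (hnotMax : ∀ i, ∀ p ∈ U i, ¬IsMax p) (n : ℕ) :
    krullDim α < (n + 1 : ℕ) ↔ ∀ i, krullDim (U i) < n := by
  simp only [krullDim_lt_coe_iff]
  constructor
  · intro h i l
    obtain ⟨q, hq⟩ := not_isMax_iff.mp (hnotMax i _ l.last.2)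
    exact Nat.succ_lt_succ_iff.mp
      (h ((LTSeries.map l Subtype.val (Subtype.strictMono_coe _)).snoc q hq))
  · intro h l
    rcases Nat.eq_zero_or_pos l.length with hl | hl
    · omega
    set l' := l.eraseLast
    obtain ⟨i, hi⟩ := hcover l'.last (not_isMax_iff.mpr ⟨_, l.eraseLast_last_rel_last hl.ne'⟩)
    have := h i ⟨l'.length, fun k => ⟨l' k, hi (LTSeries.monotone l' (Fin.le_last k))⟩, l'.step⟩
    simp only [l', RelSeries.eraseLast_length] at this
    omega

section Boundary

variable {R : Type*} [CommRing R]

def krullBoundary (a : R) : Submonoid R where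
  carrier := {s | ∃ k : ℕ, ∃ x : R, a ^ k * (1 + a * x) = s}
  one_mem' := ⟨0, 0, by ring⟩
  mul_mem' := by
    rintro _ _ ⟨k, x, rfl⟩ ⟨l, y, rfl⟩
    exact ⟨k + l, x + y + a * x * y, by ring⟩

lemma self_mem_krullBoundary (a : R) : a ∈ krullBoundary a := ⟨1, 0, by ring⟩

lemma disjoint_krullBoundary {a : R} {p q : Ideal R} [p.IsPrime] (hpq : p ≤ q) (hq : q ≠ ⊤)
    (haq : a ∈ q) (hap : a ∉ p) : Disjoint (krullBoundary a : Set R) p := by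
  rw [Set.disjoint_left]
  rintro _ ⟨k, x, rfl⟩ hp
  rcases Ideal.IsPrime.mem_or_mem ‹_› hp with hk | hx
  · exact hap (Ideal.IsPrime.mem_of_pow_mem ‹_› k hk)
  · have : (1 + a * x) - a * x ∈ q := q.sub_mem (hpq hx) (q.mul_mem_right x haq)
    exact hq ((Ideal.eq_top_iff_one q).mpr (by simpa using this))

lemma exists_isMaximal_gt_of_disjoint_krullBoundary {a : R} {p : Ideal R}
    (hp : Disjoint (krullBoundary a : Set R) p) : ∃ q : Ideal R, q.IsMaximal ∧ p < q := by
  have hproper : p ⊔ Ideal.span {a} ≠ ⊤ := by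
    rw [Ne, Ideal.eq_top_iff_one, Submodule.mem_sup]
    rintro ⟨y, hy, _, hz, hyz⟩
    obtain ⟨x, rfl⟩ := Ideal.mem_span_singleton'.mp hz
    exact Set.disjoint_left.mp hp ⟨0, -x, by rw [← hyz]; ring⟩ hy
  obtain ⟨q, hq, hle⟩ := Ideal.exists_le_maximal _ hproper
  have haq : a ∈ q := hle (Submodule.mem_sup_right (Ideal.mem_span_singleton_self a))
  refine ⟨q, hq, lt_of_le_of_ne (le_sup_left.trans hle) ?_⟩
  rintro rfl
  exact Set.disjoint_left.mp hp (self_mem_krullBoundary a) haq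

theorem ringKrullDim_lt_succ_iff (n : ℕ) :
    ringKrullDim R < (n + 1 : ℕ) ↔ ∀ a : R, ringKrullDim (Localization (krullBoundary a)) < n := by
  have hdim (a : R) : ringKrullDim (Localization (krullBoundary a)) =
      krullDim {p : PrimeSpectrum R | Disjoint (krullBoundary a : Set R) p.asIdeal} :=
    krullDim_eq_of_orderIso (IsLocalization.primeSpectrumOrderIso _ _)
  simp only [hdim]
  refine krullDim_lt_succ_iff_of_forall_Iic_subset _ (fun p hp => ?_) (fun a p hp => ?_) n
  · obtain ⟨q, hpq⟩ := not_isMax_iff.mp hp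
    obtain ⟨a, haq, hap⟩ := SetLike.exists_of_lt ((PrimeSpectrum.asIdeal_lt_asIdeal _ _).mpr hpq)
    exact ⟨a, fun p' hp' => disjoint_krullBoundary (hp'.trans hpq.le) q.isPrime.ne_top haq
      fun h => hap (hp' h)⟩
  · obtain ⟨q, hq, hpq⟩ := exists_isMaximal_gt_of_disjoint_krullBoundary hp
    exact not_isMax_iff.mpr ⟨⟨q, hq.isPrime⟩, hpq⟩

end Boundary

section PseudoSingular

variable {R : Type*} [CommRing R] {n : ℕ}

lemma Ideal.mem_span_singleton_mul_sup_iff {b z : R} {I : Ideal R} :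
    z ∈ Ideal.span {b * z} ⊔ I ↔ ∃ y, (1 + b * y) * z ∈ I := by
  nth_rw 1 [← Ideal.span_eq I]
  rw [← Ideal.span_insert, Ideal.mem_span_insert', Ideal.span_eq]
  simp only [show ∀ y, z + y * (b * z) = (1 + b * y) * z from fun y => by ring]

lemma Ideal.span_range_units_mul {ι : Type*} (u : ι → Rˣ) (g : ι → R) :
    Ideal.span (Set.range fun j => (u j : R) * g j) = Ideal.span (Set.range g) := by
  apply le_antisymm <;> rw [Ideal.span_le] <;> rintro _ ⟨j, rfl⟩
  · exact Ideal.mul_mem_left _ _ (Ideal.subset_span ⟨j, rfl⟩)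
  · rw [← Units.inv_mul_cancel_left (u j) (g j)]
    exact Ideal.mul_mem_left _ _ (Ideal.subset_span ⟨j, rfl⟩)

def pseudoSingularIdeal (a : Fin n → R) (m : Fin n → ℕ) : Ideal R :=
  Ideal.span (Set.range fun j => a j * ∏ i ∈ Iic j, a i ^ m i)

/-- Lombardi–Quitté's pseudo-singular sequences: expanding
`a₁^{m₁}(a₂^{m₂}(⋯(aₙ^{mₙ}(1 + yₙaₙ) + ⋯) + y₂a₂) + y₁a₁) = 0` gives exactly this. -/
def IsPseudoSingular (a : Fin n → R) : Prop :=
  ∃ m : Fin n → ℕ, ∏ i, a i ^ m i ∈ pseudoSingularIdeal a m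

lemma map_pseudoSingularIdeal {S : Type*} [CommRing S] (f : R →+* S) (a : Fin n → R)
    (m : Fin n → ℕ) : (pseudoSingularIdeal a m).map f = pseudoSingularIdeal (f ∘ a) m := by
  simp [pseudoSingularIdeal, Ideal.map_span, ← Set.range_comp, Function.comp_def]

lemma prod_snoc_pow (r : Fin n → R) (b : R) (m : Fin n → ℕ) (k : ℕ) :
    ∏ i, (Fin.snoc r b : Fin (n + 1) → R) i ^ (Fin.snoc m k : Fin (n + 1) → ℕ) i =
      (∏ i, r i ^ m i) * b ^ k := by
  simp [Fin.prod_univ_castSucc]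

lemma pseudoSingularIdeal_snoc (r : Fin n → R) (b : R) (m : Fin n → ℕ) (k : ℕ) :
    pseudoSingularIdeal (Fin.snoc r b) (Fin.snoc m k) =
      Ideal.span {b * ((∏ i, r i ^ m i) * b ^ k)} ⊔ pseudoSingularIdeal r m := by
  have hgen : (fun j => (Fin.snoc r b : Fin (n + 1) → R) j *
      ∏ i ∈ Iic j, (Fin.snoc r b : Fin (n + 1) → R) i ^ (Fin.snoc m k : Fin (n + 1) → ℕ) i) =
      Fin.snoc (fun j => r j * ∏ i ∈ Iic j, r i ^ m i) (b * ((∏ i, r i ^ m i) * b ^ k)) := by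
    funext j
    induction j using Fin.lastCases with
    | last => rw [Fin.snoc_last, Fin.snoc_last, ← Fin.top_eq_last, Iic_top, prod_snoc_pow]
    | cast j => simp [Fin.prod_Iic_castSucc]
  rw [pseudoSingularIdeal, hgen, Fin.range_snoc, Ideal.span_insert, pseudoSingularIdeal]

lemma isPseudoSingular_snoc_iff {r : Fin n → R} {b : R} :
    IsPseudoSingular (Fin.snoc r b : Fin (n + 1) → R) ↔
      ∃ m : Fin n → ℕ, ∃ s ∈ krullBoundary b, s * ∏ i, r i ^ m i ∈ pseudoSingularIdeal r m := by
  constructor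
  · rintro ⟨m', hm'⟩
    rw [← Fin.snoc_init_self m', prod_snoc_pow, pseudoSingularIdeal_snoc,
      Ideal.mem_span_singleton_mul_sup_iff] at hm'
    obtain ⟨y, hy⟩ := hm'
    exact ⟨Fin.init m', _, ⟨m' (Fin.last n), y, rfl⟩, by convert hy using 1; ring⟩
  · rintro ⟨m, _, ⟨k, y, rfl⟩, hs⟩
    refine ⟨Fin.snoc m k, ?_⟩
    rw [prod_snoc_pow, pseudoSingularIdeal_snoc, Ideal.mem_span_singleton_mul_sup_iff]
    exact ⟨y, by convert hs using 1; ring⟩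

lemma isPseudoSingular_algebraMap_comp_iff (M : Submonoid R) (S : Type*) [CommRing S]
    [Algebra R S] [IsLocalization M S] (r : Fin n → R) :
    IsPseudoSingular (algebraMap R S ∘ r) ↔
      ∃ m : Fin n → ℕ, ∃ s ∈ M, s * ∏ i, r i ^ m i ∈ pseudoSingularIdeal r m := by
  simp only [IsPseudoSingular, ← map_pseudoSingularIdeal, Function.comp_apply, ← map_pow,
    ← map_prod, IsLocalization.algebraMap_mem_map_algebraMap_iff M]

lemma isPseudoSingular_snoc_iff_algebraMap_comp {r : Fin n → R} {b : R} (S : Type*) [CommRing S]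
    [Algebra R S] [IsLocalization (krullBoundary b) S] :
    IsPseudoSingular (Fin.snoc r b : Fin (n + 1) → R) ↔ IsPseudoSingular (algebraMap R S ∘ r) := by
  rw [isPseudoSingular_snoc_iff, isPseudoSingular_algebraMap_comp_iff (krullBoundary b)]

lemma IsPseudoSingular.units_mul {a : Fin n → R} (h : IsPseudoSingular a) (u : Fin n → Rˣ) :
    IsPseudoSingular fun i => (u i : R) * a i := by
  obtain ⟨m, hm⟩ := h
  refine ⟨m, ?_⟩
  have hgen : (fun j => (u j : R) * a j * ∏ i ∈ Iic j, ((u i : R) * a i) ^ m i) =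
      fun j => ((u j * ∏ i ∈ Iic j, u i ^ m i : Rˣ) : R) * (a j * ∏ i ∈ Iic j, a i ^ m i) := by
    funext j
    simp only [Units.val_mul, Units.coe_prod, Units.val_pow_eq_pow_val, mul_pow, prod_mul_distrib]
    ring
  have hprod : ∏ i, ((u i : R) * a i) ^ m i = ((∏ i, u i ^ m i : Rˣ) : R) * ∏ i, a i ^ m i := by
    simp only [Units.coe_prod, Units.val_pow_eq_pow_val, mul_pow, prod_mul_distrib]
  rw [pseudoSingularIdeal, hgen, Ideal.span_range_units_mul, hprod]
  exact Ideal.mul_mem_left _ _ hm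

lemma IsLocalization.exists_units_mul_algebraMap (M : Submonoid R) {S : Type*} [CommRing S]
    [Algebra R S] [IsLocalization M S] {ι : Type*} (c : ι → S) :
    ∃ (u : ι → Sˣ) (r : ι → R), c = fun i => (u i : S) * algebraMap R S (r i) := by
  choose p hp using fun i => IsLocalization.surj M (c i)
  refine ⟨fun i => (IsLocalization.map_units S (p i).2).unit⁻¹, fun i => (p i).1, ?_⟩
  funext i
  rw [← hp i, mul_left_comm, IsUnit.val_inv_mul, mul_one]

lemma forall_isPseudoSingular_succ_iff :
    (∀ a : Fin (n + 1) → R, IsPseudoSingular a) ↔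
      ∀ b : R, ∀ c : Fin n → Localization (krullBoundary b), IsPseudoSingular c := by
  constructor
  · intro h b c
    obtain ⟨u, r, rfl⟩ := IsLocalization.exists_units_mul_algebraMap (krullBoundary b) c
    exact ((isPseudoSingular_snoc_iff_algebraMap_comp (b := b) _).mp (h _)).units_mul u
  · intro h a
    rw [← Fin.snoc_init_self a, isPseudoSingular_snoc_iff_algebraMap_comp
      (Localization (krullBoundary (a (Fin.last n))))]
    exact h _ _

lemma isPseudoSingular_fin_zero_iff (a : Fin 0 → R) : IsPseudoSingular a ↔ Subsingleton R := by
  simp [IsPseudoSingular, pseudoSingularIdeal, subsingleton_iff_zero_eq_one, eq_comm]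

lemma ringKrullDim_lt_zero_iff : ringKrullDim R < (0 : ℕ) ↔ Subsingleton R := by
  rw [ringKrullDim, Nat.cast_zero, ← not_le, krullDim_nonneg_iff, not_nonempty_iff,
    PrimeSpectrum.isEmpty_iff_subsingleton]

end PseudoSingular

/-- **Coquand–Lombardi characterization of Krull dimension.**
For a commutative ring `R` and `n : ℕ`, we have `dim R < n` iff for all
`a₁, …, aₙ ∈ R` there are exponents `m₁, …, mₙ` such that
`∏ i, aᵢ^{mᵢ}` lies in the ideal generated by the `a_j * ∏_{i ≤ j} aᵢ^{mᵢ}`. -/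
theorem ringKrullDim_lt_iff_coquand_lombardi {R : Type*} [CommRing R] (n : ℕ) :
    ringKrullDim R < n ↔
      ∀ a : Fin n → R, ∃ m : Fin n → ℕ,
        (∏ i, a i ^ m i) ∈
          Ideal.span (Set.range fun j : Fin n => a j * ∏ i ∈ Finset.Iic j, a i ^ m i) := by
  change _ ↔ ∀ a : Fin n → R, IsPseudoSingular a
  induction n generalizing R with
  | zero =>
    simp only [ringKrullDim_lt_zero_iff, isPseudoSingular_fin_zero_iff]
    exact ⟨fun h _ => h, fun h => h finZeroElim⟩
  | succ n ih =>
    simp only [ringKrullDim_lt_succ_iff, forall_isPseudoSingular_succ_iff, ih]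
end

section
/- Let R be a Noetherian ring, P ⊆ Q prime ideals of R such that the height of Q/P in R/P is at least 2. Then there exist infinitely many prime ideals P' of R with P ⊆ P' ⊆ Q and height(P'/P) = 1. -/
/-- For a prime `P`, the poset of primes of `R` containing `P`; it is
order-isomorphic to `Spec (R/P)`, so heights in it are heights of `P'/P`. -/
abbrev PrimesOver {R : Type*} [CommRing R] (P : Ideal R) :=
  {p : PrimeSpectrum R // P ≤ p.asIdeal}

/-!
Pass to `R ⧸ P`. By Krull's principal ideal theorem every element `y` of a prime `q` lies in a
prime `p ≤ q` of height at most one, namely a minimal prime of `(y)` below `q`. Primes of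
height zero are minimal, hence finitely many in a Noetherian ring; so if only finitely many
primes below `q` had height one, prime avoidance would put `q` inside one of these primes,
forcing `height q ≤ 1`.
-/

namespace PrimeSpectrum

variable {A : Type*} [CommRing A] [IsNoetherianRing A]

theorem exists_le_height_le_one_of_mem {q : PrimeSpectrum A} {y : A} (hy : y ∈ q.asIdeal) :
    ∃ p ≤ q, Order.height p ≤ 1 ∧ y ∈ p.asIdeal := by
  have := q.isPrime
  obtain ⟨r, hr, hrq⟩ :=
    Ideal.exists_minimalPrimes_le ((Ideal.span_singleton_le_iff_mem _).mpr hy)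
  refine ⟨⟨r, hr.isPrime⟩, hrq, ?_, hr.le (Ideal.mem_span_singleton_self y)⟩
  rw [← height_eq_orderHeight]
  exact Ideal.height_le_one_of_isPrincipal_of_mem_minimalPrimes _ r hr

theorem infinite_setOf_le_and_height_eq_one {q : PrimeSpectrum A} (hq : 2 ≤ Order.height q) :
    {p | p ≤ q ∧ Order.height p = 1}.Infinite := by
  intro hfin
  have hcover : (q.asIdeal : Set A) ⊆
      ⋃ p ∈ {p | IsMin p} ∪ {p | p ≤ q ∧ Order.height p = 1}, p.asIdeal := by
    intro y hy
    obtain ⟨p, hpq, hp, hyp⟩ := exists_le_height_le_one_of_mem hy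
    refine Set.mem_biUnion ?_ hyp
    rcases Order.le_one_iff.mp hp with h | h
    · exact Or.inl (Order.height_eq_zero.mp h)
    · exact Or.inr ⟨hpq, h⟩
  obtain ⟨p, hp, hqp⟩ := (Ideal.subset_union_prime_finite
    ((finite_setOfPred_isMin A).union hfin) q q fun p _ _ _ ↦ p.isPrime).mp hcover
  have hp1 : Order.height p ≤ 1 := by
    rcases hp with hp | ⟨-, hp⟩
    · simp [Order.height_eq_zero.mpr hp]
    · exact hp.le
  exact absurd (hq.trans ((Order.height_mono (show q ≤ p from hqp)).trans hp1)) (by decide)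

end PrimeSpectrum

theorem infinitely_many_intermediate_primes_general {R : Type*} [CommRing R]
    [IsNoetherianRing R] (P Q : Ideal R) (hQ : Q.IsPrime)
    (hPQ : P ≤ Q)
    (hht : 2 ≤ Order.height (⟨⟨Q, hQ⟩, hPQ⟩ : PrimesOver P)) :
    {p : PrimesOver P | p.1.asIdeal ≤ Q ∧ Order.height p = 1}.Infinite := by
  -- `PrimesOver P` is `zeroLocus P` up to unfolding set membership.
  let e : PrimesOver P ≃o PrimeSpectrum (R ⧸ P) := P.primeSpectrumQuotientOrderIsoZeroLocus.symm
  have hht' : 2 ≤ Order.height (e ⟨⟨Q, hQ⟩, hPQ⟩) := by rwa [Order.height_orderIso]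
  have hsurj : {p | p ≤ e ⟨⟨Q, hQ⟩, hPQ⟩ ∧ Order.height p = 1} ⊆ Set.range e := by
    simp [e.surjective.range_eq]
  convert (PrimeSpectrum.infinite_setOf_le_and_height_eq_one hht').preimage hsurj using 1
  ext p
  simp only [Set.mem_preimage, Set.mem_ofPred_eq, e.le_iff_le, Order.height_orderIso]
  rfl

/-- Let `R` be Noetherian and `P ⊆ Q` primes with `height (Q/P) ≥ 2`. Then there
are infinitely many primes `P'` with `P ⊆ P' ⊆ Q` and `height (P'/P) = 1`. -/
theorem infinitely_many_intermediate_primes {R : Type*} [CommRing R]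
    [IsNoetherianRing R] (P Q : Ideal R) (hP : P.IsPrime) (hQ : Q.IsPrime)
    (hPQ : P ≤ Q)
    (hht : 2 ≤ Order.height (⟨⟨Q, hQ⟩, hPQ⟩ : PrimesOver P)) :
    {p : PrimesOver P | p.1.asIdeal ≤ Q ∧ Order.height p = 1}.Infinite :=
  infinitely_many_intermediate_primes_general P Q hQ hPQ hht
end

section
/- Let R be a Noetherian ring, P a prime ideal, and M an infinite set of prime ideals P' of R each satisfying P ⊆ P' and height(P'/P) = 1. Then P equals the intersection of all primes in M. -/
theorem Order.eq_of_lt_of_le_of_height_eq_one {α : Type*} [PartialOrder α] {a q p : α}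
    (hp : height p = 1) (haq : a < q) (hqp : q ≤ p) : q = p := by
  by_contra hne
  have hlt : height q < 1 := hp ▸ height_strictMono (hqp.lt_of_ne hne)
    ((height_mono hqp).trans_lt (hp ▸ ENat.one_lt_top))
  exact not_isMin_of_lt haq (height_eq_zero.mp (Order.lt_one_iff.mp hlt))

theorem PrimesOver.asIdeal_injective {R : Type*} [CommRing R] (P : Ideal R) :
    Function.Injective fun p : PrimesOver P => p.1.asIdeal :=
  fun _ _ h => Subtype.ext (PrimeSpectrum.ext h)

theorem PrimesOver.mem_minimalPrimes_sup_span_of_height_eq_one {R : Type*} [CommRing R]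
    {P : Ideal R} [hP : P.IsPrime] (p : PrimesOver P) (hp : Order.height p = 1) {x : R}
    (hxp : x ∈ p.1.asIdeal) (hxP : x ∉ P) :
    p.1.asIdeal ∈ (P ⊔ Ideal.span {x}).minimalPrimes := by
  have hJp : P ⊔ Ideal.span {x} ≤ p.1.asIdeal :=
    sup_le p.2 (Ideal.span_le.mpr (Set.singleton_subset_iff.mpr hxp))
  obtain ⟨q, hq, hqp⟩ := Ideal.exists_minimalPrimes_le hJp
  have hxq : x ∈ q := hq.1.2 (Ideal.mem_sup_right (Ideal.mem_span_singleton_self x))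
  let q' : PrimesOver P := ⟨⟨q, hq.1.1⟩, le_sup_left.trans hq.1.2⟩
  let P' : PrimesOver P := ⟨⟨P, hP⟩, le_rfl⟩
  have hPq : P' < q' := lt_of_le_of_ne q'.2 fun h =>
    hxP ((show P = q from congrArg (fun r : PrimesOver P => r.1.asIdeal) h) ▸ hxq)
  have hqp' : q' = p := Order.eq_of_lt_of_le_of_height_eq_one hp hPq hqp
  exact hqp' ▸ hq

/-- Let `R` be Noetherian, `P` prime, and `M` an infinite set of primes `P'`
containing `P` with `height (P'/P) = 1`. Then `P = ⋂_{P' ∈ M} P'`. -/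
theorem prime_eq_sInf_of_infinite_height_one {R : Type*} [CommRing R]
    [IsNoetherianRing R] (P : Ideal R) (hP : P.IsPrime)
    (M : Set (PrimesOver P)) (hM : M.Infinite)
    (hht : ∀ p ∈ M, Order.height p = 1) :
    P = ⨅ p ∈ M, (p : PrimesOver P).1.asIdeal := by
  refine le_antisymm (le_iInf₂ fun p _ => p.2) fun x hxM => ?_
  by_contra hxP
  have hx : ∀ p ∈ M, x ∈ p.1.asIdeal := fun p hp =>
    Ideal.mem_iInf.mp (Ideal.mem_iInf.mp hxM p) hp
  have hMJ :
      (fun p : PrimesOver P => p.1.asIdeal) '' M ⊆ (P ⊔ Ideal.span {x}).minimalPrimes := by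
    rintro _ ⟨p, hp, rfl⟩
    exact p.mem_minimalPrimes_sup_span_of_height_eq_one (hht p hp) (hx p hp) hxP
  exact hM <| Set.Finite.of_finite_image
    ((Ideal.finite_minimalPrimes_of_isNoetherianRing R _).subset hMJ)
    (PrimesOver.asIdeal_injective P).injOn
end

section
/- Let X be a topological space, Y ⊆ X, and suppose 𝒜 is a family of open subsets of X covering X. If the Krull (topological) dimension of Y is at least n, then there exists U ∈ 𝒜 with dim(U ∩ Y) ≥ n. -/
/-!
Take a chain `Z₀ ⊊ ⋯ ⊊ Zₙ` of irreducible closed subsets of `Y` and some `U ∈ 𝒜` meeting `Z₀`.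
Every `Zᵢ` contains `Z₀`, hence meets the open set `U`, and being irreducible it is the closure
of its trace on `U`. So the traces `Zᵢ ∩ U` still form a strict chain in `U ∩ Y`.
-/

open Set Order Topology TopologicalSpace

section

variable {α β : Type*} [TopologicalSpace α] [TopologicalSpace β]

lemma Topology.IsOpenEmbedding.coheight_le_topologicalKrullDim {f : β → α}
    (hf : IsOpenEmbedding f) {Z : IrreducibleCloseds α} (hZ : (f ⁻¹' Z).Nonempty) :
    coheight Z ≤ topologicalKrullDim β := by
  let Z' := (IrreducibleCloseds.orderIsoOfIsOpenEmbedding f hf).symm ⟨Z, hZ⟩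
  have hZ' : IrreducibleCloseds.map f hf.continuous Z' = Z :=
    congrArg Subtype.val ((IrreducibleCloseds.orderIsoOfIsOpenEmbedding f hf).apply_symm_apply _)
  rw [← hZ', hf.coheight_map]
  exact coheight_le_krullDim Z'

lemma isOpenEmbedding_inclusion_inter {U Y : Set α} (hU : IsOpen U) :
    IsOpenEmbedding (inclusion inter_subset_right : ↥(U ∩ Y) → Y) :=
  .inclusion _ <| (Subtype.preimage_coe_inter_self Y U).symm ▸ hU.preimage continuous_subtype_val

end

/-- If a family `𝒜` of open sets covers `X` and a subset `Y ⊆ X` has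
topological (Krull) dimension at least `n`, then `dim (U ∩ Y) ≥ n` for some
`U ∈ 𝒜`. -/
theorem exists_open_of_le_topologicalKrullDim {X : Type*} [TopologicalSpace X]
    (Y : Set X) (𝒜 : Set (Set X)) (hopen : ∀ U ∈ 𝒜, IsOpen U)
    (hcover : ⋃₀ 𝒜 = Set.univ) (n : ℕ) (hY : (n : WithBot ℕ∞) ≤ topologicalKrullDim Y) :
    ∃ U ∈ 𝒜, (n : WithBot ℕ∞) ≤ topologicalKrullDim ↥(U ∩ Y) := by
  obtain ⟨p, rfl⟩ := le_krullDim_iff.mp hY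
  obtain ⟨x, hx⟩ := p.head.isIrreducible.nonempty
  obtain ⟨U, hU𝒜, hxU⟩ := mem_sUnion.mp (hcover ▸ mem_univ (x : X))
  have hf := isOpenEmbedding_inclusion_inter (Y := Y) (hopen U hU𝒜)
  refine ⟨U, hU𝒜, ?_⟩
  calc (p.length : WithBot ℕ∞) ≤ coheight p.head := mod_cast length_le_coheight_head
    _ ≤ topologicalKrullDim ↥(U ∩ Y) := hf.coheight_le_topologicalKrullDim ⟨⟨x, hxU, x.2⟩, hx⟩
end

section
/- Let A be a Noetherian ring with dim(A) = 0. Then for every monomial ordering ⪯, every element a ∈ A is algebraically dependent over A with respect to ⪯; that is, there exist natural numbers m and an element c ∈ A with a^m = c·a^{m+1} (equivalently a^m(1 − c a) = 0), giving a submonic relation since every monomial ordering restricts to the unique ordering on powers of a single variable. -/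
/-!
In a zero-dimensional ring, `a ^ m ∈ a ^ (m + 1) A` for some `m`. Otherwise `0` avoids the
multiplicative set `{a ^ n * (1 - c * a)}`, so some prime `P` avoids it too. Then `a ∉ P`, and `P`
is maximal since `dim A = 0`, so `a` is invertible modulo `P`: `1 - c * a ∈ P` for some `c`,
although `1 - c * a` lies in the multiplicative set. The relation `a ^ m = c * a ^ (m + 1)` says
that `a` is a root of `(1 - c X) X ^ m`, whose trailing coefficient is `1`.
-/

/-- A nonzero univariate polynomial is *submonic* if its trailing coefficient
(the coefficient of the lowest-degree nonzero monomial) equals `1`; on a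
polynomial ring in one variable every monomial ordering orders monomials by
degree, so this is submonicity for every monomial ordering. -/
def Polynomial.Submonic {R : Type*} [CommRing R] (f : Polynomial R) : Prop :=
  f ≠ 0 ∧ f.trailingCoeff = 1

open Polynomial

namespace Polynomial

variable {R : Type*}

theorem trailingCoeff_mul_X_pow [Semiring R] (p : R[X]) (n : ℕ) :
    (p * X ^ n).trailingCoeff = p.trailingCoeff := by
  rcases eq_or_ne p 0 with rfl | hp
  · simp
  · rw [trailingCoeff, natTrailingDegree_mul_X_pow hp, coeff_mul_X_pow, trailingCoeff]

theorem submonic_one_sub_C_mul_X_mul_X_pow [CommRing R] [Nontrivial R] (c : R) (m : ℕ) :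
    ((1 - C c * X) * X ^ m).Submonic := by
  have hcoeff : (1 - C c * X).coeff 0 = 1 := by simp
  have htrailing : ((1 - C c * X) * X ^ m).trailingCoeff = 1 := by
    rw [trailingCoeff_mul_X_pow, trailingCoeff_eq_coeff_zero (by simp [hcoeff]), hcoeff]
  exact ⟨fun h ↦ by simp [h] at htrailing, htrailing⟩

end Polynomial

section ZeroDimensional

variable {R : Type*} [CommRing R]

def powMulOneSubMulSubmonoid (a : R) : Submonoid R where
  carrier := {x | ∃ (n : ℕ) (c : R), a ^ n * (1 - c * a) = x}
  mul_mem' := by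
    rintro _ _ ⟨n, c, rfl⟩ ⟨k, d, rfl⟩
    exact ⟨n + k, c + d - c * d * a, by ring⟩
  one_mem' := ⟨0, 0, by ring⟩

theorem exists_pow_eq_mul_pow_succ_of_zero_mem {a : R} (h : 0 ∈ powMulOneSubMulSubmonoid a) :
    ∃ (m : ℕ) (c : R), a ^ m = c * a ^ (m + 1) := by
  obtain ⟨m, c, hmc⟩ := h
  exact ⟨m, c, by linear_combination hmc⟩

theorem exists_pow_eq_mul_pow_succ [Ring.KrullDimLE 0 R] (a : R) :
    ∃ (m : ℕ) (c : R), a ^ m = c * a ^ (m + 1) := by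
  by_contra h
  have hzero : (0 : R) ∉ powMulOneSubMulSubmonoid a :=
    mt exists_pow_eq_mul_pow_succ_of_zero_mem h
  obtain ⟨P, hP, -, hdisj⟩ := Ideal.exists_le_prime_disjoint ⊥ (powMulOneSubMulSubmonoid a)
    (by simpa [Set.disjoint_left] using hzero)
  have haP : a ∉ P := Set.disjoint_left.mp hdisj.symm ⟨1, 0, by ring⟩
  obtain ⟨c, p, hp, hcp⟩ := (P.isMaximal_of_isPrime).exists_inv haP
  have hmem : 1 - c * a ∈ P := by rwa [show 1 - c * a = p by linear_combination hcp.symm]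
  exact Set.disjoint_left.mp hdisj hmem ⟨0, c, by ring⟩

end ZeroDimensional

theorem dim_zero_forall_algebraically_dependent_general {A : Type*} [CommRing A]
    (hdim : ringKrullDim A = 0) (a : A) :
    (∃ (m : ℕ) (c : A), a ^ m = c * a ^ (m + 1)) ∧
      ∃ f : Polynomial A, f.Submonic ∧ f.eval a = 0 := by
  have : Nontrivial A := by
    by_contra h
    have : Subsingleton A := not_nontrivial_iff_subsingleton.mp h
    simp [ringKrullDim_eq_bot_of_subsingleton] at hdim
  have : Ring.KrullDimLE 0 A := Ring.krullDimLE_iff.mpr hdim.le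
  obtain ⟨m, c, hmc⟩ := exists_pow_eq_mul_pow_succ a
  refine ⟨⟨m, c, hmc⟩, (1 - C c * X) * X ^ m, submonic_one_sub_C_mul_X_mul_X_pow c m, ?_⟩
  simp only [eval_mul, eval_sub, eval_one, eval_C, eval_X, eval_pow]
  linear_combination hmc

/-- In a Noetherian ring of Krull dimension `0`, every element `a` satisfies
`a ^ m = c * a ^ (m + 1)` for some `m` and `c`; in particular `a` satisfies a
submonic polynomial relation (hence one for every monomial ordering). -/
theorem dim_zero_forall_algebraically_dependent {A : Type*} [CommRing A]
    [IsNoetherianRing A] (hdim : ringKrullDim A = 0) (a : A) :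
    (∃ (m : ℕ) (c : A), a ^ m = c * a ^ (m + 1)) ∧
      ∃ f : Polynomial A, f.Submonic ∧ f.eval a = 0 :=
  dim_zero_forall_algebraically_dependent_general hdim a
end
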